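/- For all s, x, y ∈ ℝ, the extended kernel satisfies (∂x⁴ − ∂y⁴)K̃_s(x,y) = −2(x−y)·∫₀^∞ e^{−2sz}·K(x+z, y+z) dz + (x² − y²)·K̃_s(x,y) + 2(x−y)·∫₀^∞ z·e^{−2sz}·A(x+z)·A(y+z) dz, where ∂x and ∂y denote partial differentiation in the first and second argument respectively. -/

import Mathlib

open MeasureTheory Real Filter Set

/-- A function with exponential decay bounds on every ray. -/
def AiryDecay (f : ℝ → ℝ) : Prop :=
  Continuous f ∧ ∀ a c : ℝ, ∃ C : ℝ, 0 ≤ C ∧ ∀ u : ℝ, a ≤ u → |f u| ≤ C * Real.exp (-c * u)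

lemma airyDecay_of_tendsto {f : ℝ → ℝ} (hf : Continuous f)
    (h : ∀ c : ℝ, Tendsto (fun z => Real.exp (c * z) * f z) atTop (nhds 0)) :
    AiryDecay f := by
  refine ⟨hf, fun a c => ?_⟩
  set g : ℝ → ℝ := fun z => Real.exp (c * z) * f z with hg
  have hgc : Continuous g := (Real.continuous_exp.comp (continuous_const.mul continuous_id)).mul hf
  obtain ⟨M, hM⟩ := Metric.tendsto_atTop.mp (h c) 1 one_pos
  obtain ⟨C₀, hC₀⟩ :=
    (isCompact_Icc (a := a) (b := max a M)).exists_bound_of_continuousOn hgc.continuousOn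
  refine ⟨max C₀ 1, le_trans zero_le_one (le_max_right _ _), fun u hu => ?_⟩
  have hgu : |g u| ≤ max C₀ 1 := by
    rcases le_total u M with h1 | h1
    · have := hC₀ u ⟨hu, le_max_of_le_right h1⟩
      simpa using this.trans (le_max_left _ _)
    · have := hM u h1
      rw [Real.dist_eq, sub_zero] at this
      exact this.le.trans (le_max_right _ _)
  have key : |f u| = |g u| * Real.exp (-c * u) := by
    rw [hg]
    simp only [abs_mul, Real.abs_exp]
    rw [mul_comm (Real.exp (c*u)) (|f u|), mul_assoc, ← Real.exp_add]
    simp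
  rw [key]
  exact mul_le_mul_of_nonneg_right hgu (Real.exp_pos _).le

lemma AiryDecay.add {f g : ℝ → ℝ} (hf : AiryDecay f) (hg : AiryDecay g) :
    AiryDecay (fun u => f u + g u) := by
  refine ⟨hf.1.add hg.1, fun a c => ?_⟩
  obtain ⟨C₁, hC₁0, hC₁⟩ := hf.2 a c
  obtain ⟨C₂, hC₂0, hC₂⟩ := hg.2 a c
  refine ⟨C₁ + C₂, by linarith, fun u hu => ?_⟩
  calc |f u + g u| ≤ |f u| + |g u| := abs_add_le _ _
    _ ≤ C₁ * Real.exp (-c*u) + C₂ * Real.exp (-c*u) := add_le_add (hC₁ u hu) (hC₂ u hu)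
    _ = (C₁ + C₂) * Real.exp (-c*u) := by ring

lemma AiryDecay.const_mul {f : ℝ → ℝ} (hf : AiryDecay f) (k : ℝ) :
    AiryDecay (fun u => k * f u) := by
  refine ⟨continuous_const.mul hf.1, fun a c => ?_⟩
  obtain ⟨C, hC0, hC⟩ := hf.2 a c
  refine ⟨|k| * C, by positivity, fun u hu => ?_⟩
  rw [abs_mul, mul_assoc]
  exact mul_le_mul_of_nonneg_left (hC u hu) (abs_nonneg k)

lemma airy_integrableOn_shift {f g : ℝ → ℝ} (hf : AiryDecay f) (hg : AiryDecay g)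
    (x y a : ℝ) : IntegrableOn (fun l => f (x + l) * g (y + l)) (Ioi a) := by
  obtain ⟨C₁, hC₁0, hC₁⟩ := hf.2 (x + a) 1
  obtain ⟨C₂, hC₂0, hC₂⟩ := hg.2 (y + a) 1
  refine Integrable.mono'
    ((exp_neg_integrableOn_Ioi a (by norm_num : (0:ℝ) < 2)).const_mul
      (C₁ * C₂ * Real.exp (-x - y)))
    ((hf.1.comp (continuous_const.add continuous_id)).mul
      (hg.1.comp (continuous_const.add continuous_id))).aestronglyMeasurable.restrict
    ?_
  filter_upwards [ae_restrict_mem measurableSet_Ioi] with l hl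
  have hl' : a ≤ l := le_of_lt hl
  have h1 := hC₁ (x + l) (by linarith)
  have h2 := hC₂ (y + l) (by linarith)
  have : ‖f (x+l) * g (y+l)‖ ≤ (C₁ * Real.exp (-(x+l))) * (C₂ * Real.exp (-(y+l))) := by
    rw [norm_mul, Real.norm_eq_abs, Real.norm_eq_abs]
    apply mul_le_mul _ _ (abs_nonneg _) (by positivity)
    · simpa [neg_one_mul] using h1
    · simpa [neg_one_mul] using h2
  refine this.trans (le_of_eq ?_)
  rw [show C₁ * Real.exp (-(x+l)) * (C₂ * Real.exp (-(y+l)))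
      = C₁ * C₂ * (Real.exp (-(x+l)) * Real.exp (-(y+l))) from by ring,
    show C₁ * C₂ * Real.exp (-x - y) * Real.exp (-2*l)
      = C₁ * C₂ * (Real.exp (-x - y) * Real.exp (-2*l)) from by ring,
    ← Real.exp_add, ← Real.exp_add]
  congr 1
  ring

lemma airy_integrableOn_exp {f g : ℝ → ℝ} (hf : AiryDecay f) (hg : AiryDecay g)
    (s x y : ℝ) (k : ℕ) :
    IntegrableOn (fun l => l ^ k * Real.exp (-2 * s * l) * (f (x + l) * g (y + l)))
      (Ioi (0:ℝ)) := by
  set c : ℝ := |s| + k + 1 with hc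
  have hb : (0:ℝ) < 2 * s + 2 * c - k := by
    have := abs_nonneg s
    have := neg_abs_le s
    simp only [hc]; linarith
  obtain ⟨C₁, hC₁0, hC₁⟩ := hf.2 x c
  obtain ⟨C₂, hC₂0, hC₂⟩ := hg.2 y c
  refine Integrable.mono'
    ((exp_neg_integrableOn_Ioi 0 hb).const_mul
      (C₁ * C₂ * Real.exp (-c * x) * Real.exp (-c * y)))
    (((continuous_pow k).mul
        (Real.continuous_exp.comp (continuous_const.mul continuous_id))).mul
      ((hf.1.comp (continuous_const.add continuous_id)).mul
        (hg.1.comp (continuous_const.add continuous_id)))).aestronglyMeasurable.restrict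
    ?_
  filter_upwards [ae_restrict_mem measurableSet_Ioi] with l hl
  have hl0 : (0:ℝ) ≤ l := le_of_lt hl
  have h1 := hC₁ (x + l) (by linarith)
  have h2 := hC₂ (y + l) (by linarith)
  have hpow : l ^ k ≤ Real.exp ((k:ℝ) * l) := by
    calc l ^ k ≤ (Real.exp l) ^ k :=
          pow_le_pow_left₀ hl0 ((le_add_of_nonneg_right zero_le_one).trans
            (Real.add_one_le_exp l)) k
      _ = Real.exp ((k:ℝ) * l) := by rw [← Real.exp_nat_mul]
  have : ‖l ^ k * Real.exp (-2*s*l) * (f (x+l) * g (y+l))‖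
      ≤ Real.exp ((k:ℝ)*l) * Real.exp (-2*s*l) *
        ((C₁ * Real.exp (-c*(x+l))) * (C₂ * Real.exp (-c*(y+l)))) := by
    rw [norm_mul, norm_mul, Real.norm_eq_abs, Real.norm_eq_abs, Real.norm_eq_abs,
      abs_of_nonneg (pow_nonneg hl0 k), Real.abs_exp, abs_mul]
    apply mul_le_mul (mul_le_mul hpow le_rfl (Real.exp_pos _).le (Real.exp_pos _).le)
      (mul_le_mul (hC₁ _ (by linarith)) (hC₂ _ (by linarith)) (abs_nonneg _) (by positivity))
      (by positivity) (by positivity)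
  refine this.trans (le_of_eq ?_)
  rw [show Real.exp ((k:ℝ)*l) * Real.exp (-2*s*l) * ((C₁ * Real.exp (-c*(x+l))) * (C₂ * Real.exp (-c*(y+l))))
      = C₁ * C₂ * (Real.exp ((k:ℝ)*l) * Real.exp (-2*s*l) * Real.exp (-c*(x+l)) * Real.exp (-c*(y+l)))
      from by ring]
  rw [← Real.exp_add, ← Real.exp_add, ← Real.exp_add]
  rw [show C₁ * C₂ * Real.exp (-c*x) * Real.exp (-c*y) * Real.exp (-(2*s+2*c-(k:ℝ)) * l)
      = C₁ * C₂ * (Real.exp (-c*x) * Real.exp (-c*y) * Real.exp (-(2*s+2*c-(k:ℝ)) * l)) from by ring]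
  rw [← Real.exp_add, ← Real.exp_add]
  congr 1
  ring

lemma airy_integrableOn_exp' {f g : ℝ → ℝ} (hf : AiryDecay f) (hg : AiryDecay g)
    (s x y : ℝ) :
    IntegrableOn (fun l => Real.exp (-2 * s * l) * (f (x + l) * g (y + l)))
      (Ioi (0:ℝ)) := by
  have := airy_integrableOn_exp hf hg s x y 0
  simpa using this

lemma airy_hasDerivAt_integral {f f' g : ℝ → ℝ}
    (hder : ∀ u, HasDerivAt f (f' u) u)
    (hf : AiryDecay f) (hf' : AiryDecay f') (hg : AiryDecay g) (s y x₀ : ℝ) :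
    HasDerivAt (fun x => ∫ l in Ioi (0:ℝ), Real.exp (-2 * s * l) * (f (x + l) * g (y + l)))
      (∫ l in Ioi (0:ℝ), Real.exp (-2 * s * l) * (f' (x₀ + l) * g (y + l))) x₀ := by
  set c : ℝ := |s| + 1 with hc
  have hc0 : 0 ≤ c := by have := abs_nonneg s; simp only [hc]; linarith
  have hb : (0:ℝ) < 2 * s + 2 * c := by
    have := neg_abs_le s; simp only [hc]; linarith
  obtain ⟨C₁, hC₁0, hC₁⟩ := hf'.2 (x₀ - 1) c
  obtain ⟨C₂, hC₂0, hC₂⟩ := hg.2 y c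
  set D : ℝ := C₁ * C₂ * Real.exp (-c * (x₀ - 1)) * Real.exp (-c * y) with hD
  have main := hasDerivAt_integral_of_dominated_loc_of_deriv_le
    (F := fun x l => Real.exp (-2 * s * l) * (f (x + l) * g (y + l)))
    (F' := fun x l => Real.exp (-2 * s * l) * (f' (x + l) * g (y + l)))
    (x₀ := x₀) (s := Metric.ball x₀ 1) (bound := fun l => D * Real.exp (-(2 * s + 2 * c) * l))
    (μ := volume.restrict (Ioi (0:ℝ))) (Metric.ball_mem_nhds x₀ one_pos)
    ?_ ?_ ?_ ?_ ?_ ?_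
  · exact main.2
  · filter_upwards with x
    exact ((Real.continuous_exp.comp (continuous_const.mul continuous_id)).mul
      ((hf.1.comp (continuous_const.add continuous_id)).mul
        (hg.1.comp (continuous_const.add continuous_id)))).aestronglyMeasurable.restrict
  · exact airy_integrableOn_exp' hf hg s x₀ y
  · exact ((Real.continuous_exp.comp (continuous_const.mul continuous_id)).mul
      ((hf'.1.comp (continuous_const.add continuous_id)).mul
        (hg.1.comp (continuous_const.add continuous_id)))).aestronglyMeasurable.restrict
  · filter_upwards [ae_restrict_mem measurableSet_Ioi] with l hl x hx
    have hl0 : (0:ℝ) < l := hl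
    have hxx : x₀ - 1 ≤ x := by
      have := abs_lt.mp (mem_ball_iff_norm.mp hx)
      rcases this with ⟨h1, _⟩; linarith
    have h1 := hC₁ (x + l) (by linarith)
    have h1' : |f' (x + l)| ≤ C₁ * Real.exp (-c * (x₀ - 1)) * Real.exp (-c * l) := by
      refine h1.trans ?_
      rw [mul_assoc, ← Real.exp_add]
      apply mul_le_mul_of_nonneg_left _ hC₁0
      apply Real.exp_le_exp.mpr
      nlinarith [mul_le_mul_of_nonneg_left hxx hc0]
    have h2 := hC₂ (y + l) (by linarith)
    have h2' : |g (y + l)| ≤ C₂ * Real.exp (-c * y) * Real.exp (-c * l) := by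
      refine h2.trans (le_of_eq ?_)
      rw [mul_assoc, ← Real.exp_add]
      congr 1; ring
    rw [norm_mul, Real.norm_eq_abs, Real.norm_eq_abs, Real.abs_exp, abs_mul]
    calc Real.exp (-2*s*l) * (|f' (x+l)| * |g (y+l)|)
        ≤ Real.exp (-2*s*l) * ((C₁ * Real.exp (-c * (x₀ - 1)) * Real.exp (-c * l)) *
            (C₂ * Real.exp (-c * y) * Real.exp (-c * l))) := by
          apply mul_le_mul_of_nonneg_left _ (Real.exp_pos _).le
          exact mul_le_mul h1' h2' (abs_nonneg _) (by positivity)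
      _ = D * Real.exp (-(2 * s + 2 * c) * l) := by
          rw [show Real.exp (-2*s*l) * ((C₁ * Real.exp (-c * (x₀ - 1)) * Real.exp (-c * l)) *
            (C₂ * Real.exp (-c * y) * Real.exp (-c * l)))
            = C₁ * C₂ * Real.exp (-c * (x₀ - 1)) * Real.exp (-c * y) *
              (Real.exp (-2*s*l) * Real.exp (-c * l) * Real.exp (-c * l)) from by ring,
            ← Real.exp_add, ← Real.exp_add, hD]
          congr 1; ring
  · exact ((exp_neg_integrableOn_Ioi 0 hb).const_mul D)
  · filter_upwards with l x _
    have h1 : HasDerivAt (fun x : ℝ => f (x + l)) (f' (x + l)) x := by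
      simpa [Function.comp_def] using (hder (x + l)).comp x ((hasDerivAt_id x).add_const l)
    simpa using (h1.mul_const (g (y + l))).const_mul (Real.exp (-2 * s * l))

lemma airy_hasDerivAt_integral' {f g g' : ℝ → ℝ}
    (hder : ∀ u, HasDerivAt g (g' u) u)
    (hg : AiryDecay g) (hg' : AiryDecay g') (hf : AiryDecay f) (s x y₀ : ℝ) :
    HasDerivAt (fun y => ∫ l in Ioi (0:ℝ), Real.exp (-2 * s * l) * (f (x + l) * g (y + l)))
      (∫ l in Ioi (0:ℝ), Real.exp (-2 * s * l) * (f (x + l) * g' (y₀ + l))) y₀ := by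
  have h := airy_hasDerivAt_integral hder hg hg' hf s x y₀
  have e : (fun y => ∫ l in Ioi (0:ℝ), Real.exp (-2 * s * l) * (g (y + l) * f (x + l)))
      = (fun y => ∫ l in Ioi (0:ℝ), Real.exp (-2 * s * l) * (f (x + l) * g (y + l))) := by
    funext y; congr 1; funext l; ring
  rw [e] at h
  convert h using 1
  congr 1; funext l; ring

lemma airy_tendsto_prod {f g : ℝ → ℝ} (hf : AiryDecay f) (hg : AiryDecay g) (x y : ℝ) :
    Tendsto (fun m => f (x + m) * g (y + m)) atTop (nhds 0) := by
  obtain ⟨C₁, hC₁0, hC₁⟩ := hf.2 x 1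
  obtain ⟨C₂, hC₂0, hC₂⟩ := hg.2 y 1
  have hG : Tendsto (fun m : ℝ => C₁ * C₂ * Real.exp (-x - y) * Real.exp (-(2 * m)))
      atTop (nhds 0) := by
    have h2 : Tendsto (fun m : ℝ => -(2 * m)) atTop atBot :=
      tendsto_neg_atBot_iff.mpr (Tendsto.const_mul_atTop two_pos tendsto_id)
    have := (Real.tendsto_exp_atBot.comp h2).const_mul (C₁ * C₂ * Real.exp (-x - y))
    simpa using this
  apply squeeze_zero_norm' _ hG
  filter_upwards [eventually_ge_atTop (0:ℝ)] with m hm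
  have h1 := hC₁ (x + m) (by linarith)
  have h2 := hC₂ (y + m) (by linarith)
  rw [norm_mul, Real.norm_eq_abs, Real.norm_eq_abs]
  calc |f (x+m)| * |g (y+m)| ≤ (C₁ * Real.exp (-1*(x+m))) * (C₂ * Real.exp (-1*(y+m))) :=
        mul_le_mul h1 h2 (abs_nonneg _) (by positivity)
    _ = C₁ * C₂ * Real.exp (-x - y) * Real.exp (-(2*m)) := by
        rw [show (C₁ * Real.exp (-1*(x+m))) * (C₂ * Real.exp (-1*(y+m)))
          = C₁ * C₂ * (Real.exp (-1*(x+m)) * Real.exp (-1*(y+m))) from by ring,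
          show C₁ * C₂ * Real.exp (-x - y) * Real.exp (-(2*m))
          = C₁ * C₂ * (Real.exp (-x - y) * Real.exp (-(2*m))) from by ring,
          ← Real.exp_add, ← Real.exp_add]
        congr 1; ring

lemma airy_shift_integral (h : ℝ → ℝ) (l : ℝ) :
    ∫ t in Ioi l, h t = ∫ t in Ioi (0:ℝ), h (t + l) := by
  have key := (measurePreserving_add_right volume l).setIntegral_preimage_emb
    (MeasurableEquiv.addRight l).measurableEmbedding h (Ioi l)
  have hpre : (fun t : ℝ => t + l) ⁻¹' Ioi l = Ioi (0:ℝ) := by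
    ext t; simp
  rw [← key, hpre]

lemma airy_wronskian (A : ℝ → ℝ)
    (hA1 : ∀ u, HasDerivAt A (deriv A u) u)
    (hA2 : ∀ u, HasDerivAt (deriv A) (u * A u) u)
    (hDA : AiryDecay A) (hDA' : AiryDecay (deriv A))
    (x y l : ℝ) :
    deriv A (x + l) * A (y + l) - A (x + l) * deriv A (y + l)
      = -((x - y) * ∫ t in Ioi l, A (x + t) * A (y + t)) := by
  set W : ℝ → ℝ := fun m =>
    deriv A (x + m) * A (y + m) - A (x + m) * deriv A (y + m) with hWdef
  have hW : ∀ m, HasDerivAt W ((x - y) * (A (x + m) * A (y + m))) m := by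
    intro m
    have hAx : HasDerivAt (fun m : ℝ => A (x + m)) (deriv A (x + m)) m := by
      simpa [Function.comp_def] using (hA1 (x + m)).comp m ((hasDerivAt_id m).const_add x)
    have hAy : HasDerivAt (fun m : ℝ => A (y + m)) (deriv A (y + m)) m := by
      simpa [Function.comp_def] using (hA1 (y + m)).comp m ((hasDerivAt_id m).const_add y)
    have hA'x : HasDerivAt (fun m : ℝ => deriv A (x + m)) ((x + m) * A (x + m)) m := by
      simpa [Function.comp_def] using (hA2 (x + m)).comp m ((hasDerivAt_id m).const_add x)
    have hA'y : HasDerivAt (fun m : ℝ => deriv A (y + m)) ((y + m) * A (y + m)) m := by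
      simpa [Function.comp_def] using (hA2 (y + m)).comp m ((hasDerivAt_id m).const_add y)
    have := (hA'x.mul hAy).sub (hAx.mul hA'y)
    exact this.congr_deriv (by ring)
  have hWlim : Tendsto W atTop (nhds 0) := by
    have h1 := airy_tendsto_prod hDA' hDA x y
    have h2 := airy_tendsto_prod hDA hDA' x y
    simpa using h1.sub h2
  have hint : IntegrableOn (fun m => (x - y) * (A (x + m) * A (y + m))) (Ioi l) :=
    (airy_integrableOn_shift hDA hDA x y l).const_mul (x - y)
  have key := integral_Ioi_of_hasDerivAt_of_tendsto' (fun m _ => hW m) hint hWlim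
  rw [integral_const_mul, zero_sub] at key
  have : W l = -((x - y) * ∫ t in Ioi l, A (x + t) * A (y + t)) := by
    rw [key, neg_neg]
  simpa [hWdef] using this

theorem extended_airy_kernel_fourth_deriv_identity
    (A : ℝ → ℝ) (hA : ContDiff ℝ (⊤ : ℕ∞) A)
    (hAiry : ∀ x : ℝ, deriv (deriv A) x = x * A x)
    (hInt : ∀ (c : ℝ) (n : ℕ),
      IntegrableOn (fun z => z ^ n * Real.exp (c * z) * A z) (Ioi 0))
    (hInt' : ∀ (c : ℝ) (n : ℕ),
      IntegrableOn (fun z => z ^ n * Real.exp (c * z) * deriv A z) (Ioi 0))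
    (hLim : ∀ (c : ℝ) (n : ℕ),
      Tendsto (fun z => z ^ n * Real.exp (c * z) * A z) atTop (nhds 0))
    (hLim' : ∀ (c : ℝ) (n : ℕ),
      Tendsto (fun z => z ^ n * Real.exp (c * z) * deriv A z) atTop (nhds 0))
    (K : ℝ → ℝ → ℝ)
    (hK : ∀ x y : ℝ, K x y = ∫ l in Ioi (0:ℝ), A (x + l) * A (y + l))
    (Kt : ℝ → ℝ → ℝ → ℝ)
    (hKt : ∀ s x y : ℝ,
      Kt s x y = ∫ l in Ioi (0:ℝ), Real.exp (-2 * s * l) * (A (x + l) * A (y + l)))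
    (s x y : ℝ) :
    iteratedDeriv 4 (fun x' => Kt s x' y) x - iteratedDeriv 4 (fun y' => Kt s x y') y
      = -2 * (x - y) * (∫ z in Ioi (0:ℝ), Real.exp (-2 * s * z) * K (x + z) (y + z))
        + (x ^ 2 - y ^ 2) * Kt s x y
        + 2 * (x - y) *
            ∫ z in Ioi (0:ℝ), z * Real.exp (-2 * s * z) * (A (x + z) * A (y + z)) := by
  -- basic differentiability facts
  have hAinf : ContDiff ℝ ((⊤ : ℕ∞) : WithTop ℕ∞) A := hA.of_le (by simp)
  have hA1 : ∀ u, HasDerivAt A (deriv A u) u :=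
    fun u => ((contDiff_infty_iff_deriv.mp hAinf).1 u).hasDerivAt
  have hA'cd : ContDiff ℝ ((⊤ : ℕ∞) : WithTop ℕ∞) (deriv A) := (contDiff_infty_iff_deriv.mp hAinf).2
  have hA2 : ∀ u, HasDerivAt (deriv A) (u * A u) u := by
    intro u
    have h := ((contDiff_infty_iff_deriv.mp hA'cd).1 u).hasDerivAt
    rwa [hAiry u] at h
  -- decay facts
  have hDA : AiryDecay A :=
    airyDecay_of_tendsto hA.continuous (fun c => by simpa using hLim c 0)
  have hDA' : AiryDecay (deriv A) :=
    airyDecay_of_tendsto hA'cd.continuous (fun c => by simpa using hLim' c 0)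
  have hD2 : AiryDecay (fun u => u * A u) :=
    airyDecay_of_tendsto (continuous_id.mul hA.continuous)
      (fun c => by
        have := hLim c 1
        simp only [pow_one] at this
        refine this.congr (fun z => by ring))
  have hD2' : AiryDecay (fun u => u * deriv A u) :=
    airyDecay_of_tendsto (continuous_id.mul hA'cd.continuous)
      (fun c => by
        have := hLim' c 1
        simp only [pow_one] at this
        refine this.congr (fun z => by ring))
  have hD22 : AiryDecay (fun u => u ^ 2 * A u) :=
    airyDecay_of_tendsto ((continuous_pow 2).mul hA.continuous)
      (fun c => by
        have := hLim c 2
        refine this.congr (fun z => by ring))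
  have hD3 : AiryDecay (fun u => A u + u * deriv A u) := hDA.add hD2'
  have hD4 : AiryDecay (fun u => 2 * deriv A u + u ^ 2 * A u) :=
    (hDA'.const_mul 2).add hD22
  -- derivative chain for the translated Airy function
  have hd2 : ∀ u, HasDerivAt (fun u => u * A u) (A u + u * deriv A u) u := by
    intro u
    have := (hasDerivAt_id u).mul (hA1 u)
    simp only [id_eq, one_mul] at this
    exact this.congr_deriv (by ring)
  have hd3 : ∀ u, HasDerivAt (fun u => A u + u * deriv A u)
      (2 * deriv A u + u ^ 2 * A u) u := by
    intro u
    have := (hA1 u).add ((hasDerivAt_id u).mul (hA2 u))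
    simp only [id_eq, one_mul] at this
    exact this.congr_deriv (by ring)
  -- fourth derivative in the first variable
  have hX : iteratedDeriv 4 (fun x' => Kt s x' y) x
      = ∫ l in Ioi (0:ℝ), Real.exp (-2 * s * l) *
          ((2 * deriv A (x + l) + (x + l) ^ 2 * A (x + l)) * A (y + l)) := by
    have e0 : (fun x' => Kt s x' y)
        = fun x' => ∫ l in Ioi (0:ℝ), Real.exp (-2 * s * l) * (A (x' + l) * A (y + l)) :=
      funext fun x' => hKt s x' y
    have e1 : deriv (fun x' => ∫ l in Ioi (0:ℝ),
          Real.exp (-2 * s * l) * (A (x' + l) * A (y + l)))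
        = fun x' => ∫ l in Ioi (0:ℝ),
          Real.exp (-2 * s * l) * (deriv A (x' + l) * A (y + l)) :=
      funext fun t => (airy_hasDerivAt_integral hA1 hDA hDA' hDA s y t).deriv
    have e2 : deriv (fun x' => ∫ l in Ioi (0:ℝ),
          Real.exp (-2 * s * l) * (deriv A (x' + l) * A (y + l)))
        = fun x' => ∫ l in Ioi (0:ℝ),
          Real.exp (-2 * s * l) * ((x' + l) * A (x' + l) * A (y + l)) :=
      funext fun t => (airy_hasDerivAt_integral hA2 hDA' hD2 hDA s y t).deriv
    have e3 : deriv (fun x' => ∫ l in Ioi (0:ℝ),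
          Real.exp (-2 * s * l) * ((x' + l) * A (x' + l) * A (y + l)))
        = fun x' => ∫ l in Ioi (0:ℝ),
          Real.exp (-2 * s * l) * ((A (x' + l) + (x' + l) * deriv A (x' + l)) * A (y + l)) :=
      funext fun t => (airy_hasDerivAt_integral hd2 hD2 hD3 hDA s y t).deriv
    have e4 : deriv (fun x' => ∫ l in Ioi (0:ℝ),
          Real.exp (-2 * s * l) * ((A (x' + l) + (x' + l) * deriv A (x' + l)) * A (y + l)))
        = fun x' => ∫ l in Ioi (0:ℝ),
          Real.exp (-2 * s * l) *
            ((2 * deriv A (x' + l) + (x' + l) ^ 2 * A (x' + l)) * A (y + l)) :=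
      funext fun t => (airy_hasDerivAt_integral hd3 hD3 hD4 hDA s y t).deriv
    rw [iteratedDeriv_succ, iteratedDeriv_succ, iteratedDeriv_succ, iteratedDeriv_succ,
      iteratedDeriv_zero, e0, e1, e2, e3, e4]
  -- fourth derivative in the second variable
  have hY : iteratedDeriv 4 (fun y' => Kt s x y') y
      = ∫ l in Ioi (0:ℝ), Real.exp (-2 * s * l) *
          (A (x + l) * (2 * deriv A (y + l) + (y + l) ^ 2 * A (y + l))) := by
    have e0 : (fun y' => Kt s x y')
        = fun y' => ∫ l in Ioi (0:ℝ), Real.exp (-2 * s * l) * (A (x + l) * A (y' + l)) :=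
      funext fun y' => hKt s x y'
    have e1 : deriv (fun y' => ∫ l in Ioi (0:ℝ),
          Real.exp (-2 * s * l) * (A (x + l) * A (y' + l)))
        = fun y' => ∫ l in Ioi (0:ℝ),
          Real.exp (-2 * s * l) * (A (x + l) * deriv A (y' + l)) :=
      funext fun t => (airy_hasDerivAt_integral' hA1 hDA hDA' hDA s x t).deriv
    have e2 : deriv (fun y' => ∫ l in Ioi (0:ℝ),
          Real.exp (-2 * s * l) * (A (x + l) * deriv A (y' + l)))
        = fun y' => ∫ l in Ioi (0:ℝ),
          Real.exp (-2 * s * l) * (A (x + l) * ((y' + l) * A (y' + l))) :=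
      funext fun t => (airy_hasDerivAt_integral' hA2 hDA' hD2 hDA s x t).deriv
    have e3 : deriv (fun y' => ∫ l in Ioi (0:ℝ),
          Real.exp (-2 * s * l) * (A (x + l) * ((y' + l) * A (y' + l))))
        = fun y' => ∫ l in Ioi (0:ℝ),
          Real.exp (-2 * s * l) * (A (x + l) * (A (y' + l) + (y' + l) * deriv A (y' + l))) :=
      funext fun t => (airy_hasDerivAt_integral' hd2 hD2 hD3 hDA s x t).deriv
    have e4 : deriv (fun y' => ∫ l in Ioi (0:ℝ),
          Real.exp (-2 * s * l) * (A (x + l) * (A (y' + l) + (y' + l) * deriv A (y' + l))))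
        = fun y' => ∫ l in Ioi (0:ℝ),
          Real.exp (-2 * s * l) *
            (A (x + l) * (2 * deriv A (y' + l) + (y' + l) ^ 2 * A (y' + l))) :=
      funext fun t => (airy_hasDerivAt_integral' hd3 hD3 hD4 hDA s x t).deriv
    rw [iteratedDeriv_succ, iteratedDeriv_succ, iteratedDeriv_succ, iteratedDeriv_succ,
      iteratedDeriv_zero, e0, e1, e2, e3, e4]
  -- integrability of all the pieces
  have hXint : IntegrableOn (fun l => Real.exp (-2 * s * l) *
      ((2 * deriv A (x + l) + (x + l) ^ 2 * A (x + l)) * A (y + l))) (Ioi (0:ℝ)) :=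
    airy_integrableOn_exp' hD4 hDA s x y
  have hYint : IntegrableOn (fun l => Real.exp (-2 * s * l) *
      (A (x + l) * (2 * deriv A (y + l) + (y + l) ^ 2 * A (y + l)))) (Ioi (0:ℝ)) :=
    airy_integrableOn_exp' hDA hD4 s x y
  have hPint : IntegrableOn (fun l => Real.exp (-2 * s * l) *
      (deriv A (x + l) * A (y + l) - A (x + l) * deriv A (y + l))) (Ioi (0:ℝ)) := by
    have h1 := airy_integrableOn_exp' hDA' hDA s x y
    have h2 := airy_integrableOn_exp' hDA hDA' s x y
    exact IntegrableOn.congr_fun (h1.sub h2) (fun l _ => by simp only [Pi.sub_apply]; ring) measurableSet_Ioi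
  have hQint : IntegrableOn (fun l => Real.exp (-2 * s * l) * (A (x + l) * A (y + l)))
      (Ioi (0:ℝ)) := airy_integrableOn_exp' hDA hDA s x y
  have hRint : IntegrableOn
      (fun l => l * Real.exp (-2 * s * l) * (A (x + l) * A (y + l))) (Ioi (0:ℝ)) := by
    have := airy_integrableOn_exp hDA hDA s x y 1
    simpa using this
  -- main computation
  rw [hX, hY, ← integral_sub hXint hYint]
  have step1 : ∫ l in Ioi (0:ℝ),
        (Real.exp (-2 * s * l) *
            ((2 * deriv A (x + l) + (x + l) ^ 2 * A (x + l)) * A (y + l))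
          - Real.exp (-2 * s * l) *
            (A (x + l) * (2 * deriv A (y + l) + (y + l) ^ 2 * A (y + l))))
      = ∫ l in Ioi (0:ℝ),
        (2 * (Real.exp (-2 * s * l) *
            (deriv A (x + l) * A (y + l) - A (x + l) * deriv A (y + l)))
          + ((x ^ 2 - y ^ 2) * (Real.exp (-2 * s * l) * (A (x + l) * A (y + l)))
            + (2 * (x - y)) * (l * Real.exp (-2 * s * l) * (A (x + l) * A (y + l))))) :=
    setIntegral_congr_fun measurableSet_Ioi (fun l _ => by ring)
  have hP2 : IntegrableOn (fun l => 2 * (Real.exp (-2 * s * l) *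
      (deriv A (x + l) * A (y + l) - A (x + l) * deriv A (y + l)))) (Ioi (0:ℝ)) :=
    hPint.const_mul 2
  have hQc : IntegrableOn (fun l => (x ^ 2 - y ^ 2) *
      (Real.exp (-2 * s * l) * (A (x + l) * A (y + l)))) (Ioi (0:ℝ)) :=
    hQint.const_mul (x ^ 2 - y ^ 2)
  have hRc : IntegrableOn (fun l => (2 * (x - y)) *
      (l * Real.exp (-2 * s * l) * (A (x + l) * A (y + l)))) (Ioi (0:ℝ)) :=
    hRint.const_mul (2 * (x - y))
  have hQR : IntegrableOn (fun l => (x ^ 2 - y ^ 2) *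
      (Real.exp (-2 * s * l) * (A (x + l) * A (y + l)))
      + (2 * (x - y)) * (l * Real.exp (-2 * s * l) * (A (x + l) * A (y + l)))) (Ioi (0:ℝ)) :=
    hQc.add hRc
  rw [step1, integral_add hP2 hQR, integral_add hQc hRc,
    integral_const_mul, integral_const_mul, integral_const_mul]
  -- identify the Wronskian integral with the kernel integral
  have hPK : ∫ l in Ioi (0:ℝ), Real.exp (-2 * s * l) *
        (deriv A (x + l) * A (y + l) - A (x + l) * deriv A (y + l))
      = (-(x - y)) * ∫ z in Ioi (0:ℝ), Real.exp (-2 * s * z) * K (x + z) (y + z) := by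
    rw [← integral_const_mul]
    apply setIntegral_congr_fun measurableSet_Ioi
    intro l _
    have hw := airy_wronskian A hA1 hA2 hDA hDA' x y l
    have hKval : ∫ t in Ioi l, A (x + t) * A (y + t) = K (x + l) (y + l) := by
      rw [airy_shift_integral (fun t => A (x + t) * A (y + t)) l, hK]
      congr 1
      funext t
      ring_nf
    simp only []
    rw [hw, hKval]
    ring
  rw [hPK, ← hKt s x y]
  ring
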